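/- Let A be a finite set of at least two points in ℝ² in strictly convex position (every point of A is an extreme point of the convex hull of A), and let v₁ ≠ v₂ be two points of A. Then there exists an enumeration a₀ = v₁, a₁, …, a_{k} = v₂ of all points of A such that the closed segments [aᵢ, aᵢ₊₁] (0 ≤ i < k) are pairwise non-crossing: two distinct segments of the path intersect only in a common endpoint (consecutive segments share exactly the point aᵢ₊₁, and non-consecutive segments are disjoint). -/

import Mathlib

/-
If `A` has at least three points, `v₁` has two neighbours on the boundary of the convex polygon
`A`; one of them, `w`, differs from `v₂`, and the line `v₁w` leaves all other points of `A`
strictly on one side. By induction `A \ {v₁}` has a non-crossing path from `w` to `v₂`, and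
prepending `v₁` keeps it non-crossing: `[v₁, w]` lies on the supporting line, while every other
segment of the path lies strictly on one side of it and touches it at most in `w`.

The neighbours are found by separating `v₁` from the convex hull of the other points by a linear
form `f` and taking the points whose rays from `v₁` have extremal slope; as no three points of
`A` are collinear, these points are unique.
-/

open Set

section Segments

variable {𝕜 E : Type*} [Field 𝕜] [LinearOrder 𝕜] [IsStrictOrderedRing 𝕜]
  [AddCommGroup E] [Module 𝕜 E]

theorem ConvexIndependent.eq_or_eq_of_wbtw {A : Set E} (hA : ConvexIndependent 𝕜 ((↑) : A → E))
    {x y z : E} (hx : x ∈ A) (hy : y ∈ A) (hz : z ∈ A) (h : Wbtw 𝕜 x y z) : y = x ∨ y = z := by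
  by_contra! hne
  refine convexIndependent_set_iff_notMem_convexHull_sdiff.1 hA y hy
    (convexHull_mono (s := {x, z}) ?_ ?_)
  · rintro p (rfl | rfl)
    exacts [⟨hx, hne.1.symm⟩, ⟨hz, hne.2.symm⟩]
  · rw [convexHull_pair]
    exact h.mem_segment

theorem ConvexIndependent.not_collinear {A : Set E} (hA : ConvexIndependent 𝕜 ((↑) : A → E))
    {x y z : E} (hx : x ∈ A) (hy : y ∈ A) (hz : z ∈ A) (hxy : x ≠ y) (hxz : x ≠ z)
    (hyz : y ≠ z) : ¬Collinear 𝕜 {x, y, z} := fun h => by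
  rcases h.wbtw_or_wbtw_or_wbtw with h | h | h
  · rcases hA.eq_or_eq_of_wbtw hx hy hz h with h | h <;> tauto
  · rcases hA.eq_or_eq_of_wbtw hy hz hx h with h | h <;> tauto
  · rcases hA.eq_or_eq_of_wbtw hz hx hy h with h | h <;> tauto

variable {φ : E →ₗ[𝕜] 𝕜} {c : 𝕜} {v w x y : E}

theorem segment_subset_of_apply_eq (hv : φ v = c) (hw : φ w = c) :
    segment 𝕜 v w ⊆ {z | φ z = c} :=
  (convex_hyperplane φ.isLinear c).segment_subset hv hw

theorem segment_inter_segment_eq_empty_of_apply_lt (hv : φ v = c) (hw : φ w = c)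
    (hx : c < φ x) (hy : c < φ y) : segment 𝕜 v w ∩ segment 𝕜 x y = ∅ := by
  refine eq_empty_of_forall_notMem fun z ⟨hzvw, hzxy⟩ => ?_
  have hz : c < φ z := (convex_halfSpace_gt φ.isLinear c).segment_subset hx hy hzxy
  exact hz.ne' (segment_subset_of_apply_eq hv hw hzvw)

theorem segment_inter_segment_eq_singleton_of_apply_lt (hv : φ v = c) (hw : φ w = c)
    (hy : c < φ y) : segment 𝕜 v w ∩ segment 𝕜 w y = {w} := by
  refine eq_singleton_iff_unique_mem.2 ⟨⟨right_mem_segment 𝕜 v w, left_mem_segment 𝕜 w y⟩, ?_⟩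
  rintro z ⟨hzvw, s, t, hs, ht, hst, rfl⟩
  have hφz : s * c + t * φ y = c := by
    simpa [hw] using segment_subset_of_apply_eq hv hw hzvw
  have ht0 : t * (φ y - c) = 0 := by linear_combination hφz - c * hst
  obtain rfl : t = 0 := (mul_eq_zero.1 ht0).resolve_right (sub_pos.2 hy).ne'
  obtain rfl : s = 1 := by linarith
  simp

end Segments

def det₂ : ℝ × ℝ →ₗ[ℝ] ℝ × ℝ →ₗ[ℝ] ℝ :=
  LinearMap.mk₂ ℝ (fun a b => a.1 * b.2 - a.2 * b.1)
    (by intros; simp only [Prod.fst_add, Prod.snd_add]; ring)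
    (by intros; simp only [Prod.smul_fst, Prod.smul_snd, smul_eq_mul]; ring)
    (by intros; simp only [Prod.fst_add, Prod.snd_add]; ring)
    (by intros; simp only [Prod.smul_fst, Prod.smul_snd, smul_eq_mul]; ring)

theorem det₂_apply (a b : ℝ × ℝ) : det₂ a b = a.1 * b.2 - a.2 * b.1 := rfl

theorem det₂_self (a : ℝ × ℝ) : det₂ a a = 0 := by
  rw [det₂_apply]; ring

theorem det₂_swap (a b : ℝ × ℝ) : det₂ b a = -det₂ a b := by
  simp only [det₂_apply]; ring

theorem det₂_smul_add_det₂_smul_add_det₂_smul (a b c : ℝ × ℝ) :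
    det₂ a b • c + det₂ b c • a + det₂ c a • b = 0 := by
  ext <;> simp only [det₂_apply, Prod.fst_add, Prod.snd_add, Prod.smul_fst, Prod.smul_snd,
    smul_eq_mul, Prod.fst_zero, Prod.snd_zero] <;> ring

theorem det₂_mul_add_det₂_mul_add_det₂_mul (f : ℝ × ℝ →ₗ[ℝ] ℝ) (a b c : ℝ × ℝ) :
    det₂ a b * f c + det₂ b c * f a + det₂ c a * f b = 0 := by
  simpa using congrArg f (det₂_smul_add_det₂_smul_add_det₂_smul a b c)

theorem exists_eq_smul_of_det₂_eq_zero {a b : ℝ × ℝ} (h : det₂ a b = 0) (ha : a ≠ 0) :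
    ∃ t : ℝ, b = t • a := by
  rw [det₂_apply] at h
  by_cases h1 : a.1 = 0
  · have h2 : a.2 ≠ 0 := fun h2 => ha (Prod.ext h1 h2)
    refine ⟨b.2 / a.2, Prod.ext ?_ ?_⟩
    · simp only [Prod.smul_fst, smul_eq_mul]
      field_simp
      linear_combination -h
    · simp [h2]
  · refine ⟨b.1 / a.1, Prod.ext ?_ ?_⟩
    · simp [h1]
    · simp only [Prod.smul_snd, smul_eq_mul]
      field_simp
      linear_combination h

theorem collinear_of_det₂_sub_eq_zero {x y z : ℝ × ℝ} (h : det₂ (y - x) (z - x) = 0) :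
    Collinear ℝ {x, y, z} := by
  rcases eq_or_ne y x with rfl | hyx
  · simpa using collinear_pair ℝ y z
  obtain ⟨t, ht⟩ := exists_eq_smul_of_det₂_eq_zero h (sub_ne_zero.2 hyx)
  have hz : z = AffineMap.lineMap x y t := by
    rw [AffineMap.lineMap_apply, vsub_eq_sub, vadd_eq_add, ← ht, sub_add_cancel]
  have := collinear_insert_of_mem_affineSpan_pair (hz ▸ AffineMap.lineMap_mem_affineSpan_pair t x y)
  rwa [insert_comm, pair_comm] at this

theorem exists_forall_det₂_mul_pos {B : Set (ℝ × ℝ)} (hB : B.Finite) (hne : B.Nonempty)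
    {f : ℝ × ℝ →ₗ[ℝ] ℝ} {v a : ℝ × ℝ} (ha : f a ≠ 0) (hf : ∀ z ∈ B, f (z - v) < 0)
    (hdet : ∀ z ∈ B, ∀ z' ∈ B, z ≠ z' → det₂ (z - v) (z' - v) ≠ 0) :
    ∃ w ∈ B, ∀ z ∈ B, z ≠ w → 0 < det₂ (z - v) (w - v) * f a := by
  -- Up to sign, `slope z` is the `det₂ a`-coordinate of the point where the ray from `v` through
  -- `z` meets the line `f = f v - 1`; by `key`, comparing slopes compares orientations.
  set slope : ℝ × ℝ → ℝ := fun z => det₂ a (z - v) / f (z - v)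
  have key : ∀ z w, f (z - v) ≠ 0 → f (w - v) ≠ 0 →
      det₂ (z - v) (w - v) * f a = f (z - v) * f (w - v) * (slope w - slope z) := by
    intro z w hz hw
    have h := det₂_mul_add_det₂_mul_add_det₂_mul f a (z - v) (w - v)
    rw [det₂_swap a (w - v)] at h
    simp only [slope]
    field_simp
    linear_combination h
  obtain ⟨w, hw, hmax⟩ := exists_max_image B slope hB hne
  refine ⟨w, hw, fun z hz hzw => ?_⟩
  have hzv := (hf z hz).ne
  have hwv := (hf w hw).ne
  rw [key z w hzv hwv]
  refine mul_pos (mul_pos_of_neg_of_neg (hf z hz) (hf w hw))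
    (sub_pos.2 ((hmax z hz).lt_of_ne fun heq => hdet z hz w hw hzw ?_))
  simpa [heq, ha] using key z w hzv hwv

theorem exists_supporting_line_of_det₂_mul_pos {B : Set (ℝ × ℝ)} {v w : ℝ × ℝ} {c : ℝ}
    (h : ∀ z ∈ B, z ≠ w → 0 < det₂ (z - v) (w - v) * c) :
    ∃ φ : ℝ × ℝ →ₗ[ℝ] ℝ, φ w = φ v ∧ ∀ z ∈ B, z ≠ w → φ v < φ z := by
  have hφ : ∀ z, (c • det₂.flip (w - v)) z - (c • det₂.flip (w - v)) v =
      det₂ (z - v) (w - v) * c := fun z => by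
    simp only [map_sub, LinearMap.smul_apply, LinearMap.sub_apply, LinearMap.flip_apply,
      smul_eq_mul]
    ring
  refine ⟨c • det₂.flip (w - v), ?_, fun z hz hzw => ?_⟩
  · rw [← sub_eq_zero, hφ w, det₂_self, zero_mul]
  · exact sub_pos.1 ((hφ z).symm ▸ h z hz hzw)

theorem ConvexIndependent.exists_supporting_edge {A : Set (ℝ × ℝ)}
    (hA : ConvexIndependent ℝ ((↑) : A → ℝ × ℝ)) (hfin : A.Finite) (h3 : 3 ≤ A.ncard)
    {v : ℝ × ℝ} (hv : v ∈ A) (u : ℝ × ℝ) :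
    ∃ w ∈ A \ {v}, w ≠ u ∧
      ∃ φ : ℝ × ℝ →ₗ[ℝ] ℝ, φ w = φ v ∧ ∀ z ∈ A \ {v}, z ≠ w → φ v < φ z := by
  set B := A \ {v}
  have hB : 1 < B.ncard := by rw [ncard_sdiff_singleton_of_mem hv]; omega
  have hvB : v ∉ convexHull ℝ B := convexIndependent_set_iff_notMem_convexHull_sdiff.1 hA v hv
  obtain ⟨f, t, hft, htv⟩ := geometric_hahn_banach_closed_point (convex_convexHull ℝ B)
    (hfin.sdiff.isClosed_convexHull (𝕜 := ℝ)) hvB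
  have hf : ∀ z ∈ B, (f : ℝ × ℝ →ₗ[ℝ] ℝ) (z - v) < 0 := fun z hz => by
    simpa using (hft z (subset_convexHull ℝ B hz)).trans htv
  obtain ⟨z₀, hz₀⟩ : B.Nonempty := nonempty_of_ncard_ne_zero (by omega)
  have hdet : ∀ z ∈ B, ∀ z' ∈ B, z ≠ z' → det₂ (z - v) (z' - v) ≠ 0 := fun z hz z' hz' hzz' h =>
    hA.not_collinear hv hz.1 hz'.1 (Ne.symm hz.2) (Ne.symm hz'.2) hzz'
      (collinear_of_det₂_sub_eq_zero h)
  obtain ⟨w₁, hw₁, h₁⟩ := exists_forall_det₂_mul_pos hfin.sdiff ⟨z₀, hz₀⟩ (hf z₀ hz₀).ne hf hdet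
  -- `-(z₀ - v)` in place of `z₀ - v` flips the side, so `w₂` is the other neighbour of `v`.
  obtain ⟨w₂, hw₂, h₂⟩ := exists_forall_det₂_mul_pos hfin.sdiff ⟨z₀, hz₀⟩ (a := -(z₀ - v))
    (by rw [map_neg, neg_ne_zero]; exact (hf z₀ hz₀).ne) hf hdet
  have hw₁₂ : w₁ ≠ w₂ := by
    rintro rfl
    obtain ⟨z, hz, hzw⟩ := exists_ne_of_one_lt_ncard hB w₁
    have h₁z := h₁ z hz hzw
    have h₂z := h₂ z hz hzw
    rw [map_neg, mul_neg] at h₂z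
    linarith
  by_cases hu : w₁ = u
  · exact ⟨w₂, hw₂, hu ▸ hw₁₂.symm, exists_supporting_line_of_det₂_mul_pos h₂⟩
  · exact ⟨w₁, hw₁, hu, exists_supporting_line_of_det₂_mul_pos h₁⟩

section Paths

variable {α : Type*}

def pathCons (v : α) (b : ℕ → α) : ℕ → α
  | 0 => v
  | i + 1 => b i

theorem bijOn_pathCons {B : Set α} {b : ℕ → α} {k : ℕ} {v : α} (hb : BijOn b (Iic k) B)
    (hv : v ∉ B) : BijOn (pathCons v b) (Iic (k + 1)) (insert v B) := by
  refine ⟨?_, ?_, ?_⟩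
  · rintro (_ | i) hi
    · exact mem_insert v B
    · exact mem_insert_of_mem v (hb.mapsTo (by simpa using hi))
  · rintro (_ | i) hi (_ | j) hj h
    · rfl
    · exact (hv ((show v = b j from h) ▸ hb.mapsTo (mem_Iic.2 (by simpa using hj)))).elim
    · exact (hv ((show b i = v from h) ▸ hb.mapsTo (mem_Iic.2 (by simpa using hi)))).elim
    · simpa using hb.injOn (mem_Iic.2 (by simpa using hi)) (mem_Iic.2 (by simpa using hj)) h
  · rintro x (rfl | hx)
    · exact ⟨0, by simp, rfl⟩
    · obtain ⟨i, hi, rfl⟩ := hb.surjOn hx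
      exact ⟨i + 1, by simpa using hi, rfl⟩

variable {E : Type*} [AddCommGroup E] [Module ℝ E]

structure IsNoncrossing (a : ℕ → E) (k : ℕ) : Prop where
  inter_succ : ∀ i, i + 1 < k →
    segment ℝ (a i) (a (i + 1)) ∩ segment ℝ (a (i + 1)) (a (i + 2)) = {a (i + 1)}
  inter_eq_empty : ∀ i j, i + 1 < j → j < k →
    segment ℝ (a i) (a (i + 1)) ∩ segment ℝ (a j) (a (j + 1)) = ∅

theorem isNoncrossing_one (a : ℕ → E) : IsNoncrossing a 1 :=
  ⟨fun _ _ => by omega, fun _ _ _ _ => by omega⟩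

theorem IsNoncrossing.pathCons {b : ℕ → E} {k : ℕ} (hb : IsNoncrossing b k) {v : E}
    (φ : E →ₗ[ℝ] ℝ) (hφ₀ : φ (b 0) = φ v) (hφ : ∀ i, 1 ≤ i → i ≤ k → φ v < φ (b i)) :
    IsNoncrossing (pathCons v b) (k + 1) := by
  refine ⟨?_, ?_⟩
  · rintro (_ | i) hi
    · exact segment_inter_segment_eq_singleton_of_apply_lt rfl hφ₀ (hφ 1 le_rfl (by omega))
    · exact hb.inter_succ i (by omega)
  · rintro (_ | i) (_ | j) hij hj
    · omega
    · exact segment_inter_segment_eq_empty_of_apply_lt rfl hφ₀ (hφ j (by omega) (by omega))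
        (hφ (j + 1) (by omega) (by omega))
    · omega
    · exact hb.inter_eq_empty i j (by omega) (by omega)

end Paths

theorem exists_noncrossing_path {A : Set (ℝ × ℝ)} (hfin : A.Finite)
    (hA : ConvexIndependent ℝ ((↑) : A → ℝ × ℝ)) {v₁ v₂ : ℝ × ℝ} (hv₁ : v₁ ∈ A) (hv₂ : v₂ ∈ A)
    (hne : v₁ ≠ v₂) :
    ∃ (k : ℕ) (a : ℕ → ℝ × ℝ), k + 1 = A.ncard ∧ a 0 = v₁ ∧ a k = v₂ ∧
      BijOn a (Iic k) A ∧ IsNoncrossing a k := by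
  obtain ⟨n, hn⟩ : ∃ n, A.ncard = n + 2 := by
    have := ncard_le_ncard (pair_subset hv₁ hv₂) hfin
    rw [ncard_pair hne] at this
    exact ⟨A.ncard - 2, by omega⟩
  induction n generalizing A v₁ with
  | zero =>
    have hA₂ : {v₁, v₂} = A := eq_of_subset_of_ncard_le (pair_subset hv₁ hv₂)
      (by rw [hn, ncard_pair hne]) hfin
    refine ⟨1, pathCons v₁ fun _ => v₂, by omega, rfl, rfl, ?_, isNoncrossing_one _⟩
    rw [← hA₂]
    refine bijOn_pathCons (k := 0) ?_ (by simpa using hne)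
    rw [← bot_eq_zero, Iic_bot]
    exact bijOn_singleton.2 rfl
  | succ n ih =>
    obtain ⟨w, hw, hwv₂, φ, hφw, hφ⟩ := hA.exists_supporting_edge hfin (by omega) hv₁ v₂
    have hB : (A \ {v₁}).ncard = n + 2 := by rw [ncard_sdiff_singleton_of_mem hv₁]; omega
    obtain ⟨k, b, hk, hb₀, hbk, hb, hbnc⟩ :=
      ih hfin.sdiff (hA.mono sdiff_subset) hw ⟨hv₂, hne.symm⟩ hwv₂ hB
    refine ⟨k + 1, pathCons v₁ b, by omega, rfl, hbk, ?_, ?_⟩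
    · rw [← insert_eq_of_mem hv₁, ← insert_sdiff_singleton]
      exact bijOn_pathCons hb fun h => h.2 rfl
    · refine hbnc.pathCons φ (hb₀ ▸ hφw) fun i hi hik => hφ (b i) (hb.mapsTo (mem_Iic.2 hik)) ?_
      rintro hbi
      have := hb.injOn (mem_Iic.2 hik) (mem_Iic.2 (Nat.zero_le k)) (hbi.trans hb₀.symm)
      omega

theorem noncrossing_path_convex_position_general (A : Set (ℝ × ℝ)) (hfin : A.Finite)
    (hconv : ∀ a ∈ A, a ∈ Set.extremePoints ℝ (convexHull ℝ A))
    (v₁ v₂ : ℝ × ℝ) (hv₁ : v₁ ∈ A) (hv₂ : v₂ ∈ A) (hne : v₁ ≠ v₂) :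
    ∃ (k : ℕ) (a : ℕ → ℝ × ℝ),
      k + 1 = A.ncard ∧ a 0 = v₁ ∧ a k = v₂ ∧
      Set.InjOn a (Set.Iic k) ∧ a '' Set.Iic k = A ∧
      (∀ i : ℕ, i + 1 < k →
        segment ℝ (a i) (a (i + 1)) ∩ segment ℝ (a (i + 1)) (a (i + 2)) = {a (i + 1)}) ∧
      (∀ i j : ℕ, i + 1 < j → j < k →
        segment ℝ (a i) (a (i + 1)) ∩ segment ℝ (a j) (a (j + 1)) = ∅) := by
  have hA : ConvexIndependent ℝ ((↑) : A → ℝ × ℝ) :=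
    (convex_convexHull ℝ A).convexIndependent_extremePoints.mono hconv
  obtain ⟨k, a, hk, h₀, hk', hbij, hnc⟩ := exists_noncrossing_path hfin hA hv₁ hv₂ hne
  exact ⟨k, a, hk, h₀, hk', hbij.injOn, hbij.image_eq, hnc.inter_succ, hnc.inter_eq_empty⟩

/-- **Non-crossing Hamiltonian paths on points in convex position.**
Let `A` be a finite set of at least two points of the plane in strictly convex position
(every point of `A` is an extreme point of its convex hull), and let `v₁ ≠ v₂` be two
points of `A`.  Then the points of `A` can be enumerated as `a 0 = v₁, a 1, …, a k = v₂`
so that the closed segments joining consecutive points are pairwise non-crossing: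
consecutive segments meet exactly in their shared endpoint and non-consecutive segments
are disjoint. -/
theorem noncrossing_path_convex_position (A : Set (ℝ × ℝ)) (hfin : A.Finite)
    (hcard : 2 ≤ A.ncard)
    (hconv : ∀ a ∈ A, a ∈ Set.extremePoints ℝ (convexHull ℝ A))
    (v₁ v₂ : ℝ × ℝ) (hv₁ : v₁ ∈ A) (hv₂ : v₂ ∈ A) (hne : v₁ ≠ v₂) :
    ∃ (k : ℕ) (a : ℕ → ℝ × ℝ),
      k + 1 = A.ncard ∧ a 0 = v₁ ∧ a k = v₂ ∧
      Set.InjOn a (Set.Iic k) ∧ a '' Set.Iic k = A ∧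
      (∀ i : ℕ, i + 1 < k →
        segment ℝ (a i) (a (i + 1)) ∩ segment ℝ (a (i + 1)) (a (i + 2)) = {a (i + 1)}) ∧
      (∀ i j : ℕ, i + 1 < j → j < k →
        segment ℝ (a i) (a (i + 1)) ∩ segment ℝ (a j) (a (j + 1)) = ∅) :=
  noncrossing_path_convex_position_general A hfin hconv v₁ v₂ hv₁ hv₂ hne
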